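/- arXiv:2306.16134 — 3 statements merged into one kernel-verified Lean document; each statement's English description precedes it below -/
import Mathlib

section
/- Let G be a digraph and A, B ⊆ V(G). The maximum size of a collection of pairwise vertex-disjoint paths each starting in A and ending in B equals the minimum size of a vertex set X ⊆ V(G) such that G − X contains no path from A to B. -/
/-!
Induction on the number of edges. Let `k` be the minimum size of an `(A,B)`-separator of `G` and
let `uv` be an edge. If `G - uv` has no smaller separator, its `k` disjoint paths will do.
Otherwise `G - uv` has a separator `S` with `|S| < k`; then `S ∪ {u}` and `S ∪ {v}` separate `A`
from `B` in `G`, so `|S| = k - 1` and `u, v ∉ S`. Every separator of `A` from `S ∪ {u}` in `G - uv`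
separates `A` from `B` in `G`, so induction gives `k` disjoint `A → S ∪ {u}` paths in `G - uv`,
and likewise `k` disjoint `S ∪ {v} → B` paths. As `S` separates `A` from `B` in `G - uv`, a path
of the first family meets a path of the second only in `S`, at the end of the one and the start
of the other. Prepending `u` to the path starting at `v` and gluing the two families at
`S ∪ {u}` gives `k` disjoint `A → B` paths in `G`.
-/

/-- A (directed) path given as a nonempty list of pairwise-distinct vertices
with consecutive pairs being edges of the digraph `G`. -/
def IsPathList {V : Type*} (G : V → V → Prop) (p : List V) : Prop :=
  p ≠ [] ∧ p.Nodup ∧ p.Chain' G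

/-- The first vertex of the list `p` belongs to `A`. -/
def FirstIn {V : Type*} (p : List V) (A : Set V) : Prop := ∃ a ∈ A, p.head? = some a

/-- The last vertex of the list `p` belongs to `A`. -/
def LastIn {V : Type*} (p : List V) (A : Set V) : Prop := ∃ a ∈ A, p.getLast? = some a

/-- `X` is an `(A,B)`-separator in `G`: every path of `G` starting in `A` and
ending in `B` meets `X`. -/
def IsSeparator {V : Type*} (G : V → V → Prop) (A B X : Set V) : Prop :=
  ∀ p : List V, IsPathList G p → FirstIn p A → LastIn p B → ∃ v ∈ p, v ∈ X

/-- Two lists of vertices share no vertex. -/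
def ListsDisjoint {V : Type*} (p q : List V) : Prop := ∀ v, v ∈ p → v ∉ q

section Menger

open Finset

variable {V : Type*} {G : V → V → Prop} {A B : Set V} {p q : List V} {u v w : V}

section Lists

theorem List.Nodup.eq_of_getLast?_eq_of_mem_prefix {l₁ l₂ : List V} {z : V}
    (h : (l₁ ++ w :: l₂).Nodup) (hz : (l₁ ++ w :: l₂).getLast? = some z)
    (hzw : z ∈ l₁ ++ [w]) : z = w := by
  rcases eq_or_ne l₂ [] with rfl | hl₂
  · simpa using hz.symm
  · rw [← List.singleton_append, ← List.append_assoc] at h hz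
    rw [List.getLast?_append_of_ne_nil _ hl₂] at hz
    exact (List.disjoint_of_nodup_append h hzw (List.mem_of_mem_getLast? hz)).elim

theorem List.Nodup.eq_of_head?_eq_of_mem_suffix {l₁ l₂ : List V} {z : V}
    (h : (l₁ ++ w :: l₂).Nodup) (hz : (l₁ ++ w :: l₂).head? = some z)
    (hzw : z ∈ w :: l₂) : z = w := by
  cases l₁ with
  | nil => simpa using hz.symm
  | cons a l₁ =>
    obtain rfl : a = z := by simpa using hz
    exact (List.disjoint_of_nodup_append h List.mem_cons_self hzw).elim

end Lists

section Paths

theorem isPathList_iff : IsPathList G p ↔ p ≠ [] ∧ p.Nodup ∧ p.IsChain G := Iff.rfl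

theorem isPathList_reverse : IsPathList (flip G) p.reverse ↔ IsPathList G p := by
  simp [isPathList_iff, List.isChain_reverse, flip]

theorem firstIn_reverse : FirstIn p.reverse A ↔ LastIn p A := by
  simp [FirstIn, LastIn]

theorem lastIn_reverse : LastIn p.reverse A ↔ FirstIn p A := by
  simp [FirstIn, LastIn]

theorem FirstIn.of_prefix (h : FirstIn p A) (hqp : q <+: p) (hq : q ≠ []) : FirstIn q A := by
  obtain ⟨t, rfl⟩ := hqp
  rwa [FirstIn, List.head?_append_of_ne_nil _ hq] at h

theorem IsPathList.mono {G' : V → V → Prop} (hG : ∀ x y, G x y → G' x y) (hp : IsPathList G p) :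
    IsPathList G' p :=
  ⟨hp.1, hp.2.1, hp.2.2.imp fun x y => hG x y⟩

theorem List.IsChain.exists_isPathList {w : List V} (hw : w.IsChain G) (hne : w ≠ []) :
    ∃ p, IsPathList G p ∧ p.head? = w.head? ∧ p.getLast? = w.getLast? ∧ p ⊆ w := by
  induction w with
  | nil => exact absurd rfl hne
  | cons a w ih =>
    rcases eq_or_ne w [] with rfl | hw₀
    · exact ⟨[a], ⟨by simp, by simp, .singleton a⟩, rfl, rfl, List.Subset.refl _⟩
    obtain ⟨p, ⟨hp₀, hpn, hpc⟩, hph, hpl, hpw⟩ := ih hw.tail hw₀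
    have hlast : (a :: w).getLast? = w.getLast? := List.getLast?_append_of_ne_nil [a] hw₀
    by_cases ha : a ∈ p
    · obtain ⟨s, t, rfl⟩ := List.append_of_mem ha
      refine ⟨a :: t, ⟨List.cons_ne_nil _ _, hpn.sublist (List.sublist_append_right _ _),
        hpc.right_of_append⟩, rfl, ?_, ?_⟩
      · rw [hlast, ← hpl, List.getLast?_append_of_ne_nil _ (List.cons_ne_nil _ _)]
      · exact fun x hx => List.mem_cons_of_mem _ (hpw (List.mem_append_right _ hx))
    · refine ⟨a :: p, ⟨List.cons_ne_nil _ _, List.nodup_cons.2 ⟨ha, hpn⟩,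
        hpc.cons fun y hy => hw.rel_head? (hph ▸ hy)⟩, rfl, ?_, List.cons_subset_cons _ hpw⟩
      rw [hlast, ← hpl]
      exact List.getLast?_append_of_ne_nil [a] hp₀

end Paths

section Separators

variable {S X : Set V}

theorem IsSeparator.reverse (hX : IsSeparator G A B X) : IsSeparator (flip G) B A X := by
  intro p hp hB hA
  obtain ⟨x, hx, hxX⟩ := hX p.reverse ((isPathList_reverse (G := flip G)).2 hp)
    (firstIn_reverse.2 hA) (lastIn_reverse.2 hB)
  exact ⟨x, List.mem_reverse.1 hx, hxX⟩

theorem isSeparator_of_subset (h : B ⊆ X) : IsSeparator G A B X := fun _ _ _ ⟨b, hb, hpb⟩ =>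
  ⟨b, List.mem_of_mem_getLast? hpb, h hb⟩

theorem IsSeparator.exists_mem_of_isChain (hX : IsSeparator G A B X) {w : List V}
    (hw : w.IsChain G) (hne : w ≠ []) (hA : FirstIn w A) (hB : LastIn w B) : ∃ x ∈ w, x ∈ X := by
  obtain ⟨p, hp, hh, hl, hpw⟩ := hw.exists_isPathList hne
  obtain ⟨x, hx, hxX⟩ := hX p hp (by rwa [FirstIn, hh]) (by rwa [LastIn, hl])
  exact ⟨x, hpw hx, hxX⟩

theorem IsSeparator.mem_and_getLast?_eq_and_head?_eq (hS : IsSeparator G A B S)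
    (hp : IsPathList G p) (hpA : FirstIn p A) (hpS : ∀ x ∈ p, x ∈ S → p.getLast? = some x)
    (hq : IsPathList G q) (hqB : LastIn q B) (hqS : ∀ x ∈ q, x ∈ S → q.head? = some x)
    (hwp : w ∈ p) (hwq : w ∈ q) : w ∈ S ∧ p.getLast? = some w ∧ q.head? = some w := by
  obtain ⟨p₁, p₂, rfl⟩ := List.append_of_mem hwp
  obtain ⟨q₁, q₂, rfl⟩ := List.append_of_mem hwq
  -- `p` up to `w`, then `q` from `w`, is an `A → B` walk, so it meets `S`
  have hchain : (p₁ ++ [w] ++ q₂).IsChain G :=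
    (hp.2.2.prefix ⟨p₂, by simp⟩).append_overlap hq.2.2.right_of_append (List.cons_ne_nil _ _)
  obtain ⟨z, hz, hzS⟩ := hS.exists_mem_of_isChain hchain (by simp)
    (by simpa [FirstIn, List.head?_append] using hpA)
    (by simpa [LastIn, List.getLast?_append, List.getLast?_cons] using hqB)
  have hzw : z = w := by
    rcases List.mem_append.1 hz with hz | hz
    · have hpre : p₁ ++ [w] <+: p₁ ++ w :: p₂ := ⟨p₂, by simp⟩
      exact hp.2.1.eq_of_getLast?_eq_of_mem_prefix (hpS z (hpre.subset hz) hzS) hz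
    · exact hq.2.1.eq_of_head?_eq_of_mem_suffix
        (hqS z (List.mem_append_right _ (List.mem_cons_of_mem _ hz)) hzS)
        (List.mem_cons_of_mem _ hz)
  rw [hzw] at hzS
  exact ⟨hzS, hpS w hwp hzS, hqS w hwq hzS⟩

end Separators

section DeleteEdge

def deleteEdge (G : V → V → Prop) (u v : V) : V → V → Prop := fun x y => G x y ∧ ¬(x = u ∧ y = v)

theorem flip_deleteEdge : flip (deleteEdge G u v) = deleteEdge (flip G) v u := by
  funext x y
  simp [deleteEdge, flip, and_comm]

theorem List.IsChain.exists_eq_append_of_not_isChain_deleteEdge {p : List V} (hp : p.IsChain G)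
    (hp' : ¬ p.IsChain (deleteEdge G u v)) :
    ∃ s t, p = s ++ u :: v :: t ∧ (s ++ [u]).IsChain (deleteEdge G u v) := by
  induction p with
  | nil => exact absurd .nil hp'
  | cons a p ih =>
    cases p with
    | nil => exact absurd (.singleton a) hp'
    | cons b p =>
      rw [List.isChain_cons_cons] at hp hp'
      by_cases hab : deleteEdge G u v a b
      · obtain ⟨s, t, hst, hs⟩ := ih hp.2 fun h => hp' ⟨hab, h⟩
        refine ⟨a :: s, t, by rw [hst, List.cons_append], hs.cons fun y hy => ?_⟩
        have hb : (s ++ [u]).head? = some b := by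
          rw [← List.head?_cons (l := p), hst]
          simp [List.head?_append]
        rw [hb, Option.mem_def, Option.some.injEq] at hy
        exact hy ▸ hab
      · obtain ⟨rfl, rfl⟩ : a = u ∧ b = v := by simpa [deleteEdge, hp.1] using hab
        exact ⟨[], p, rfl, .singleton a⟩

variable {S X : Set V}

theorem IsSeparator.exists_prefix_of_deleteEdge (hS : IsSeparator (deleteEdge G u v) A B S)
    (hp : IsPathList G p) (hA : FirstIn p A) (hB : LastIn p B) :
    ∃ q, q <+: p ∧ IsPathList (deleteEdge G u v) q ∧ FirstIn q A ∧ LastIn q (insert u S) := by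
  suffices ∃ s x, s ++ [x] <+: p ∧ (s ++ [x]).IsChain (deleteEdge G u v) ∧ x ∈ insert u S by
    obtain ⟨s, x, hsp, hs, hx⟩ := this
    exact ⟨s ++ [x], hsp, ⟨by simp, hp.2.1.sublist hsp.sublist, hs⟩, hA.of_prefix hsp (by simp),
      x, hx, by simp⟩
  by_cases hch : p.IsChain (deleteEdge G u v)
  · obtain ⟨x, hxp, hxS⟩ := hS p ⟨hp.1, hp.2.1, hch⟩ hA hB
    obtain ⟨s, t, rfl⟩ := List.append_of_mem hxp
    exact ⟨s, x, ⟨t, by simp⟩, hch.prefix ⟨t, by simp⟩, Or.inr hxS⟩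
  · obtain ⟨s, t, rfl, hs⟩ := hp.2.2.exists_eq_append_of_not_isChain_deleteEdge hch
    exact ⟨s, u, ⟨v :: t, by simp⟩, hs, Or.inl rfl⟩

theorem IsSeparator.insert_tail_of_deleteEdge (hS : IsSeparator (deleteEdge G u v) A B S) :
    IsSeparator G A B (insert u S) := by
  intro p hp hA hB
  obtain ⟨q, hqp, -, -, x, hx, hqx⟩ := hS.exists_prefix_of_deleteEdge hp hA hB
  exact ⟨x, hqp.subset (List.mem_of_mem_getLast? hqx), hx⟩

theorem IsSeparator.of_deleteEdge_of_insert_tail (hS : IsSeparator (deleteEdge G u v) A B S)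
    (hX : IsSeparator (deleteEdge G u v) A (insert u S) X) : IsSeparator G A B X := by
  intro p hp hA hB
  obtain ⟨q, hqp, hq, hqA, hqS⟩ := hS.exists_prefix_of_deleteEdge hp hA hB
  obtain ⟨x, hxq, hxX⟩ := hX q hq hqA hqS
  exact ⟨x, hqp.subset hxq, hxX⟩

theorem IsSeparator.reverse_deleteEdge (hS : IsSeparator (deleteEdge G u v) A B S) :
    IsSeparator (deleteEdge (flip G) v u) B A S :=
  flip_deleteEdge ▸ hS.reverse

theorem IsSeparator.insert_head_of_deleteEdge (hS : IsSeparator (deleteEdge G u v) A B S) :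
    IsSeparator G A B (insert v S) :=
  hS.reverse_deleteEdge.insert_tail_of_deleteEdge.reverse

theorem IsSeparator.of_deleteEdge_of_insert_head (hS : IsSeparator (deleteEdge G u v) A B S)
    (hX : IsSeparator (deleteEdge G u v) (insert v S) B X) : IsSeparator G A B X :=
  (hS.reverse_deleteEdge.of_deleteEdge_of_insert_tail hX.reverse_deleteEdge).reverse

end DeleteEdge

def IsLinkage (G : V → V → Prop) (A B : Set V) (P : Finset (List V)) : Prop :=
  (∀ p ∈ P, IsPathList G p ∧ FirstIn p A ∧ LastIn p B) ∧
    ∀ p ∈ P, ∀ q ∈ P, p ≠ q → ListsDisjoint p q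

namespace IsLinkage

variable {P Q : Finset (List V)}

theorem eq_of_mem (hP : IsLinkage G A B P) (hp : p ∈ P) (hq : q ∈ P) (hwp : w ∈ p)
    (hwq : w ∈ q) : p = q :=
  by_contra fun hpq => hP.2 p hp q hq hpq w hwp hwq

theorem mono {G' : V → V → Prop} (hG : ∀ x y, G x y → G' x y) (hP : IsLinkage G A B P) :
    IsLinkage G' A B P :=
  ⟨fun p hp => ⟨(hP.1 p hp).1.mono hG, (hP.1 p hp).2⟩, hP.2⟩

theorem insert_of_disjoint [DecidableEq V] (hP : IsLinkage G A B P)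
    (hp : IsPathList G p ∧ FirstIn p A ∧ LastIn p B) (hpP : ∀ q ∈ P, ListsDisjoint p q) :
    IsLinkage G A B (insert p P) := by
  refine ⟨fun q hq => ?_, fun q hq r hr hqr => ?_⟩
  · rcases Finset.mem_insert.1 hq with rfl | hq
    exacts [hp, hP.1 q hq]
  · rcases Finset.mem_insert.1 hq with rfl | hq' <;> rcases Finset.mem_insert.1 hr with rfl | hr'
    exacts [absurd rfl hqr, hpP r hr', fun x hxq hxr => hpP q hq' x hxr hxq, hP.2 q hq' r hr' hqr]

theorem card_le_of_isSeparator (hP : IsLinkage G A B P) {X : Finset V}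
    (hX : IsSeparator G A B ↑X) : #P ≤ #X :=
  card_le_card_of_forall_subsingleton (fun p x => x ∈ p)
    (fun p hp => by
      obtain ⟨h₁, h₂, h₃⟩ := hP.1 p hp
      obtain ⟨x, hxp, hxX⟩ := hX p h₁ h₂ h₃
      exact ⟨x, hxX, hxp⟩)
    (fun _ _ _ hp _ hq => hP.eq_of_mem hp.1 hq.1 hp.2 hq.2)

theorem reverse [DecidableEq V] (hP : IsLinkage G A B P) :
    IsLinkage (flip G) B A (P.image List.reverse) := by
  refine ⟨fun q hq => ?_, fun q hq r hr hqr => ?_⟩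
  · obtain ⟨p, hp, rfl⟩ := mem_image.1 hq
    obtain ⟨h₁, h₂, h₃⟩ := hP.1 p hp
    exact ⟨isPathList_reverse.2 h₁, firstIn_reverse.2 h₃, lastIn_reverse.2 h₂⟩
  · obtain ⟨p, hp, rfl⟩ := mem_image.1 hq
    obtain ⟨p', hp', rfl⟩ := mem_image.1 hr
    intro x hx hx'
    exact hP.2 p hp p' hp' (by rintro rfl; exact hqr rfl) x (List.mem_reverse.1 hx)
      (List.mem_reverse.1 hx')

theorem card_image_reverse [DecidableEq V] : #(P.image List.reverse) = #P :=
  card_image_of_injective _ List.reverse_injective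

variable {X : Finset V} {x : V}

theorem exists_getLast?_eq [DecidableEq V] (hP : IsLinkage G A ↑X P) (hX : #X ≤ #P)
    (hx : x ∈ X) : ∃ p ∈ P, p.getLast? = some x := by
  by_contra! h
  have hP' : IsLinkage G A ↑(X.erase x) P := by
    refine ⟨fun p hp => ?_, hP.2⟩
    obtain ⟨hpath, hpA, y, hy, hpy⟩ := hP.1 p hp
    exact ⟨hpath, hpA, y, mem_erase.2 ⟨fun hyx => h p hp (hyx ▸ hpy), hy⟩, hpy⟩
  have := hP'.card_le_of_isSeparator (isSeparator_of_subset subset_rfl)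
  have := card_erase_lt_of_mem hx
  omega

theorem getLast?_eq_of_mem [DecidableEq V] (hP : IsLinkage G A ↑X P) (hX : #X ≤ #P)
    (hp : p ∈ P) (hxp : x ∈ p) (hxX : x ∈ X) : p.getLast? = some x := by
  obtain ⟨q, hq, hqx⟩ := hP.exists_getLast?_eq hX hxX
  rwa [hP.eq_of_mem hp hq hxp (List.mem_of_mem_getLast? hqx)]

theorem exists_head?_eq [DecidableEq V] (hP : IsLinkage G ↑X B P) (hX : #X ≤ #P)
    (hx : x ∈ X) : ∃ p ∈ P, p.head? = some x := by
  obtain ⟨r, hr, hrx⟩ := hP.reverse.exists_getLast?_eq (by rwa [card_image_reverse]) hx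
  obtain ⟨p, hp, rfl⟩ := mem_image.1 hr
  exact ⟨p, hp, by rwa [List.getLast?_reverse] at hrx⟩

theorem head?_eq_of_mem [DecidableEq V] (hP : IsLinkage G ↑X B P) (hX : #X ≤ #P)
    (hp : p ∈ P) (hxp : x ∈ p) (hxX : x ∈ X) : p.head? = some x := by
  simpa using hP.reverse.getLast?_eq_of_mem (by rwa [card_image_reverse])
    (mem_image_of_mem _ hp) (List.mem_reverse.2 hxp) hxX

end IsLinkage

theorem IsPathList.append_tail (hp : IsPathList G p) (hq : IsPathList G q)
    (hpq : p.getLast? = q.head?) (hpq' : ∀ x ∈ p, x ∈ q → q.head? = some x) :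
    IsPathList G (p ++ q.tail) ∧ (p ++ q.tail).head? = p.head? ∧
      (p ++ q.tail).getLast? = q.getLast? := by
  obtain ⟨hp₀, hpn, hpc⟩ := hp
  obtain ⟨hq₀, hqn, hqc⟩ := hq
  obtain ⟨y, t, rfl⟩ := List.exists_cons_of_ne_nil hq₀
  have hpy : p.getLast? = some y := hpq
  refine ⟨⟨by simp [hp₀], hpn.append (List.nodup_cons.1 hqn).2 fun x hxp hxt => ?_,
    hpc.append hqc.tail fun a ha b hb => ?_⟩, List.head?_append_of_ne_nil _ hp₀, ?_⟩
  · obtain rfl : y = x := by simpa using hpq' x hxp (List.mem_cons_of_mem _ hxt)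
    exact (List.nodup_cons.1 hqn).1 hxt
  · obtain rfl : y = a := by rwa [hpy, Option.mem_def, Option.some.injEq] at ha
    exact hqc.rel_head? hb
  · cases t with
    | nil => simpa using hpy
    | cons b t => rw [List.tail_cons, List.getLast?_append_of_ne_nil _ (List.cons_ne_nil _ _),
        List.getLast?_cons_cons]

theorem IsLinkage.listsDisjoint_append_tail {C D : Set V} {P Q : Finset (List V)}
    (hP : IsLinkage G A C P) (hQ : IsLinkage G D B Q)
    (hPQ : ∀ p ∈ P, ∀ q ∈ Q, ∀ w ∈ p, w ∈ q → p.getLast? = some w ∧ q.head? = some w)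
    {p p' q q' : List V} (hp : p ∈ P) (hp' : p' ∈ P) (hq : q ∈ Q) (hq' : q' ∈ Q)
    (hpq : p.getLast? = q.head?) (hpq' : p'.getLast? = q'.head?) (hne : p ≠ p') :
    ListsDisjoint (p ++ q.tail) (p' ++ q'.tail) := by
  have hlast : p.getLast? ≠ p'.getLast? := by
    intro h
    obtain ⟨a, -, ha⟩ := (hP.1 p hp).2.2
    exact hne (hP.eq_of_mem hp hp' (List.mem_of_mem_getLast? ha)
      (List.mem_of_mem_getLast? (h ▸ ha)))
  intro x hx hx'
  rcases List.mem_append.1 hx with h | h <;> rcases List.mem_append.1 hx' with h' | h'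
  · exact hP.2 p hp p' hp' hne x h h'
  · obtain ⟨h₁, h₂⟩ := hPQ p hp q' hq' x h (List.mem_of_mem_tail h')
    exact hlast (by rw [h₁, hpq', h₂])
  · obtain ⟨h₁, h₂⟩ := hPQ p' hp' q hq x h' (List.mem_of_mem_tail h)
    exact hlast (by rw [hpq, h₁, h₂])
  · exact hlast (by
      rw [hpq, hpq', hQ.eq_of_mem hq hq' (List.mem_of_mem_tail h) (List.mem_of_mem_tail h')])

theorem IsLinkage.exists_append [DecidableEq V] {P Q : Finset (List V)} {Y : Finset V}
    (hP : IsLinkage G A ↑Y P) (hPY : #Y ≤ #P) (hQ : IsLinkage G ↑Y B Q) (hQY : #Y ≤ #Q)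
    (hPQ : ∀ p ∈ P, ∀ q ∈ Q, ∀ w ∈ p, w ∈ q → p.getLast? = some w ∧ q.head? = some w) :
    ∃ R, IsLinkage G A B R ∧ #R = #Y := by
  choose! f hfP hf using fun y (hy : y ∈ Y) => hP.exists_getLast?_eq hPY hy
  choose! g hgQ hg using fun y (hy : y ∈ Y) => hQ.exists_head?_eq hQY hy
  have hfg : ∀ y ∈ Y, (f y).getLast? = (g y).head? := fun y hy => (hf y hy).trans (hg y hy).symm
  have hdisj : ∀ y ∈ Y, ∀ y' ∈ Y, y ≠ y' →
      ListsDisjoint (f y ++ (g y).tail) (f y' ++ (g y').tail) := fun y hy y' hy' hne =>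
    hP.listsDisjoint_append_tail hQ hPQ (hfP y hy) (hfP y' hy') (hgQ y hy) (hgQ y' hy')
      (hfg y hy) (hfg y' hy') fun h => hne (Option.some_injective _ <|
        (hf y hy).symm.trans (h ▸ hf y' hy'))
  refine ⟨Y.image fun y => f y ++ (g y).tail, ⟨fun r hr => ?_, fun r hr r' hr' hne => ?_⟩,
    card_image_of_injOn fun y hy y' hy' heq => by_contra fun hne => ?_⟩
  · obtain ⟨y, hy, rfl⟩ := mem_image.1 hr
    obtain ⟨hpath, hh, hl⟩ := (hP.1 _ (hfP y hy)).1.append_tail (hQ.1 _ (hgQ y hy)).1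
      (hfg y hy) fun x hxf hxg => (hPQ _ (hfP y hy) _ (hgQ y hy) x hxf hxg).2
    obtain ⟨-, ⟨a, ha, hfa⟩, -⟩ := hP.1 _ (hfP y hy)
    obtain ⟨-, -, ⟨b, hb, hgb⟩⟩ := hQ.1 _ (hgQ y hy)
    exact ⟨hpath, ⟨a, ha, hh.trans hfa⟩, ⟨b, hb, hl.trans hgb⟩⟩
  · obtain ⟨y, hy, rfl⟩ := mem_image.1 hr
    obtain ⟨y', hy', rfl⟩ := mem_image.1 hr'
    exact hdisj y hy y' hy' fun h => hne (h ▸ rfl)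
  · have hyf : y ∈ f y ++ (g y).tail :=
      List.mem_append_left _ (List.mem_of_mem_getLast? (hf y hy))
    exact hdisj y hy y' hy' hne y hyf (heq ▸ hyf)

theorem IsLinkage.insert_cons_erase [DecidableEq V] {Q : Finset (List V)} {S : Finset V}
    (hQ : IsLinkage G ↑(insert v S) B Q) (hq : q ∈ Q) (hqv : q.head? = some v) (huv : G u v)
    (hu : ∀ r ∈ Q, u ∉ r) : IsLinkage G ↑(insert u S) B (insert (u :: q) (Q.erase q)) := by
  have hQe : IsLinkage G ↑(insert u S) B (Q.erase q) := by
    refine ⟨fun r hr => ?_, fun r hr r' hr' =>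
      hQ.2 r (mem_of_mem_erase hr) r' (mem_of_mem_erase hr')⟩
    obtain ⟨hrq, hrQ⟩ := mem_erase.1 hr
    obtain ⟨hpath, ⟨a, ha, hra⟩, hrB⟩ := hQ.1 r hrQ
    have hav : a ≠ v := by
      rintro rfl
      exact hrq (hQ.eq_of_mem hrQ hq (List.mem_of_mem_head? hra) (List.mem_of_mem_head? hqv))
    exact ⟨hpath, ⟨a, mem_insert_of_mem ((mem_insert.1 ha).resolve_left hav), hra⟩, hrB⟩
  obtain ⟨⟨hq₀, hqn, hqc⟩, -, b, hb, hqb⟩ := hQ.1 q hq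
  refine hQe.insert_of_disjoint ⟨⟨List.cons_ne_nil _ _, List.nodup_cons.2 ⟨hu q hq, hqn⟩,
    hqc.cons fun y hy => ?_⟩, ⟨u, by simp, rfl⟩,
    ⟨b, hb, (List.getLast?_append_of_ne_nil [u] hq₀).trans hqb⟩⟩ fun r hr x hx hxr => ?_
  · obtain rfl : v = y := by rwa [hqv, Option.mem_def, Option.some.injEq] at hy
    exact huv
  · obtain ⟨hrq, hrQ⟩ := mem_erase.1 hr
    rcases List.mem_cons.1 hx with rfl | hx
    · exact hu r hrQ hxr
    · exact hrq (hQ.eq_of_mem hrQ hq hxr hx)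

theorem exists_isLinkage_of_deleteEdge [DecidableEq V] {P Q : Finset (List V)} {S : Finset V}
    (huv : G u v) (hS : IsSeparator (deleteEdge G u v) A B ↑S) (hu : u ∉ S) (hv : v ∉ S)
    (hP : IsLinkage (deleteEdge G u v) A ↑(insert u S) P) (hPc : #(insert u S) ≤ #P)
    (hQ : IsLinkage (deleteEdge G u v) ↑(insert v S) B Q) (hQc : #(insert v S) ≤ #Q) :
    ∃ R, IsLinkage G A B R ∧ #R = #(insert u S) := by
  have hG : ∀ x y, deleteEdge G u v x y → G x y := fun _ _ h => h.1
  have hPQ : ∀ p ∈ P, ∀ q ∈ Q, ∀ w ∈ p, w ∈ q → w ∈ S ∧ p.getLast? = some w ∧ q.head? = some w :=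
    fun p hp q hq w hwp hwq => hS.mem_and_getLast?_eq_and_head?_eq (hP.1 p hp).1 (hP.1 p hp).2.1
      (fun x hx hxS => hP.getLast?_eq_of_mem hPc hp hx (mem_insert_of_mem hxS))
      (hQ.1 q hq).1 (hQ.1 q hq).2.2
      (fun x hx hxS => hQ.head?_eq_of_mem hQc hq hx (mem_insert_of_mem hxS)) hwp hwq
  obtain ⟨pu, hpu, hpu_last⟩ := hP.exists_getLast?_eq hPc (mem_insert_self u S)
  obtain ⟨qv, hqv, hqv_head⟩ := hQ.exists_head?_eq hQc (mem_insert_self v S)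
  have hu_notMem : ∀ q ∈ Q, u ∉ q := fun q hq huq =>
    hu (hPQ pu hpu q hq u (List.mem_of_mem_getLast? hpu_last) huq).1
  have hQ'c : #(insert u S) ≤ #(insert (u :: qv) (Q.erase qv)) := by
    rw [card_insert_of_notMem fun h => hu_notMem _ (mem_of_mem_erase h) List.mem_cons_self,
      card_erase_add_one hqv, card_insert_of_notMem hu]
    rwa [card_insert_of_notMem hv] at hQc
  refine (hP.mono hG).exists_append hPc
    ((hQ.mono hG).insert_cons_erase hqv hqv_head huv hu_notMem) hQ'c
    fun p hp q hq w hwp hwq => ?_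
  rcases mem_insert.1 hq with rfl | hq
  · rcases List.mem_cons.1 hwq with rfl | hwq
    · exact ⟨hP.getLast?_eq_of_mem hPc hp hwp (mem_insert_self w S), rfl⟩
    · obtain ⟨hwS, -, hqw⟩ := hPQ p hp qv hqv w hwp hwq
      obtain rfl : v = w := by rwa [hqv_head, Option.some.injEq] at hqw
      exact (hv hwS).elim
  · exact (hPQ p hp q (mem_of_mem_erase hq) w hwp hwq).2

section Fintype

noncomputable def minSep (G : V → V → Prop) (A B : Set V) : ℕ :=
  sInf {n : ℕ | ∃ X : Finset V, IsSeparator G A B ↑X ∧ #X = n}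

theorem minSep_le_card {X : Finset V} (hX : IsSeparator G A B ↑X) : minSep G A B ≤ #X :=
  Nat.sInf_le ⟨X, hX, rfl⟩

variable [Fintype V]

theorem isSeparator_univ : IsSeparator G A B ↑(univ : Finset V) := by
  intro p hp _ _
  exact ⟨p.head hp.1, List.head_mem hp.1, mem_coe.2 (mem_univ _)⟩

theorem exists_isSeparator_card_eq_minSep (G : V → V → Prop) (A B : Set V) :
    ∃ X : Finset V, IsSeparator G A B ↑X ∧ #X = minSep G A B :=
  Nat.sInf_mem (s := {n | ∃ X : Finset V, IsSeparator G A B ↑X ∧ #X = n})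
    ⟨_, univ, isSeparator_univ, rfl⟩

theorem le_minSep {n : ℕ} (h : ∀ X : Finset V, IsSeparator G A B ↑X → n ≤ #X) :
    n ≤ minSep G A B := by
  obtain ⟨X, hX, hXc⟩ := exists_isSeparator_card_eq_minSep G A B
  exact hXc ▸ h X hX

theorem IsLinkage.card_le_minSep {P : Finset (List V)} (hP : IsLinkage G A B P) :
    #P ≤ minSep G A B :=
  le_minSep fun _ hX => hP.card_le_of_isSeparator hX

theorem exists_isLinkage_minSep_le_card_of_forall_not (hG : ∀ x y, ¬ G x y) (A B : Set V) :
    ∃ P, IsLinkage G A B P ∧ minSep G A B ≤ #P := by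
  classical
  set T : Finset V := univ.filter (· ∈ A ∩ B)
  have hsingle : ∀ p, IsPathList G p → ∃ a, p = [a] := by
    rintro (_ | ⟨a, _ | ⟨b, p⟩⟩) ⟨hp₀, -, hpc⟩
    exacts [absurd rfl hp₀, ⟨a, rfl⟩, absurd (List.isChain_cons_cons.1 hpc).1 (hG a b)]
  refine ⟨T.image fun a => [a], ⟨fun p hp => ?_, fun p hp q hq hpq => ?_⟩, ?_⟩
  · obtain ⟨a, ha, rfl⟩ := mem_image.1 hp
    obtain ⟨haA, haB⟩ := (mem_filter.1 ha).2
    exact ⟨⟨List.cons_ne_nil _ _, List.nodup_singleton a, .singleton a⟩, ⟨a, haA, rfl⟩, a, haB, rfl⟩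
  · obtain ⟨a, -, rfl⟩ := mem_image.1 hp
    obtain ⟨b, -, rfl⟩ := mem_image.1 hq
    simp_all [ListsDisjoint]
  · rw [card_image_of_injective _ List.singleton_injective]
    refine minSep_le_card fun p hp hA hB => ?_
    obtain ⟨a, rfl⟩ := hsingle p hp
    simp only [FirstIn, LastIn, List.head?_cons, List.getLast?_singleton, Option.some.injEq,
      exists_eq_right'] at hA hB
    exact ⟨a, List.mem_singleton_self a, by simp [T, hA, hB]⟩

theorem exists_isLinkage_minSep_le_card_of_deleteEdge (huv : G u v)
    (ih : ∀ A B : Set V,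
      ∃ P, IsLinkage (deleteEdge G u v) A B P ∧ minSep (deleteEdge G u v) A B ≤ #P)
    (A B : Set V) : ∃ P, IsLinkage G A B P ∧ minSep G A B ≤ #P := by
  classical
  obtain ⟨S, hS, hSc⟩ := exists_isSeparator_card_eq_minSep (deleteEdge G u v) A B
  by_cases hk : minSep G A B ≤ #S
  · obtain ⟨P, hP, hPc⟩ := ih A B
    exact ⟨P, hP.mono fun _ _ h => h.1, hk.trans (hSc.trans_le hPc)⟩
  push Not at hk
  have hu : minSep G A B ≤ #(insert u S) :=
    minSep_le_card (by rw [coe_insert]; exact hS.insert_tail_of_deleteEdge)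
  have hv : minSep G A B ≤ #(insert v S) :=
    minSep_le_card (by rw [coe_insert]; exact hS.insert_head_of_deleteEdge)
  have huS : u ∉ S := fun h => by rw [insert_eq_of_mem h] at hu; omega
  have hvS : v ∉ S := fun h => by rw [insert_eq_of_mem h] at hv; omega
  obtain ⟨P, hP, hPc⟩ := ih A ↑(insert u S)
  obtain ⟨Q, hQ, hQc⟩ := ih ↑(insert v S) B
  have hPc' : #(insert u S) ≤ #P := calc
    #(insert u S) ≤ minSep G A B := by rw [card_insert_of_notMem huS]; omega
    _ ≤ minSep (deleteEdge G u v) A ↑(insert u S) := le_minSep fun X hX =>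
      minSep_le_card (hS.of_deleteEdge_of_insert_tail (by rwa [← coe_insert]))
    _ ≤ #P := hPc
  have hQc' : #(insert v S) ≤ #Q := calc
    #(insert v S) ≤ minSep G A B := by rw [card_insert_of_notMem hvS]; omega
    _ ≤ minSep (deleteEdge G u v) ↑(insert v S) B := le_minSep fun X hX =>
      minSep_le_card (hS.of_deleteEdge_of_insert_head (by rwa [← coe_insert]))
    _ ≤ #Q := hQc
  obtain ⟨R, hR, hRc⟩ := exists_isLinkage_of_deleteEdge huv hS huS hvS hP hPc' hQ hQc'
  exact ⟨R, hR, hRc ▸ hu⟩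

theorem exists_isLinkage_minSep_le_card (G : V → V → Prop) (A B : Set V) :
    ∃ P, IsLinkage G A B P ∧ minSep G A B ≤ #P := by
  classical
  suffices ∀ E : Finset (V × V), ∀ G : V → V → Prop, (∀ x y, G x y → (x, y) ∈ E) →
      ∀ A B : Set V, ∃ P, IsLinkage G A B P ∧ minSep G A B ≤ #P from
    this univ G (fun _ _ _ => mem_univ _) A B
  intro E
  induction E using Finset.induction_on with
  | empty =>
    exact fun G hG => exists_isLinkage_minSep_le_card_of_forall_not fun x y h =>
      notMem_empty _ (hG x y h)
  | insert e E _ ih =>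
    intro G hG
    by_cases he : G e.1 e.2
    · refine exists_isLinkage_minSep_le_card_of_deleteEdge he (ih _ fun x y h => ?_)
      exact (mem_insert.1 (hG x y h.1)).resolve_left (by rintro rfl; exact h.2 ⟨rfl, rfl⟩)
    · exact ih G fun x y h => (mem_insert.1 (hG x y h)).resolve_left (by rintro rfl; exact he h)

end Fintype

end Menger

theorem menger_digraph_general {V : Type*} [Fintype V]
    (G : V → V → Prop) (A B : Set V) :
    sSup {n : ℕ | ∃ P : Finset (List V),
        (∀ p ∈ P, IsPathList G p ∧ FirstIn p A ∧ LastIn p B) ∧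
        (∀ p ∈ P, ∀ q ∈ P, p ≠ q → ListsDisjoint p q) ∧ P.card = n} =
    sInf {n : ℕ | ∃ X : Finset V, IsSeparator G A B ↑X ∧ X.card = n} := by
  obtain ⟨P, hP, hPk⟩ := exists_isLinkage_minSep_le_card G A B
  refine IsGreatest.csSup_eq ⟨⟨P, hP.1, hP.2, le_antisymm hP.card_le_minSep hPk⟩, ?_⟩
  rintro _ ⟨Q, hQ₁, hQ₂, rfl⟩
  exact IsLinkage.card_le_minSep ⟨hQ₁, hQ₂⟩

/-- Menger's theorem for digraphs (vertex version): the maximum size of a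
collection of pairwise vertex-disjoint `A → B` paths equals the minimum size
of an `(A,B)`-separator. -/
theorem menger_digraph {V : Type*} [Fintype V] [DecidableEq V]
    (G : V → V → Prop) (A B : Set V) :
    sSup {n : ℕ | ∃ P : Finset (List V),
        (∀ p ∈ P, IsPathList G p ∧ FirstIn p A ∧ LastIn p B) ∧
        (∀ p ∈ P, ∀ q ∈ P, p ≠ q → ListsDisjoint p q) ∧ P.card = n} =
    sInf {n : ℕ | ∃ X : Finset V, IsSeparator G A B ↑X ∧ X.card = n} :=
  menger_digraph_general G A B
end

section
/- Let 𝒜 = (A_j | j ∈ J) be a sequence of subsets of a finite set S, let r be the rank function of the transversal matroid M[𝒜], and let U ⊆ S. Then r(U) = min over I ⊆ J of (|J \ I| + |⋃_{i∈I} (A_i ∩ U)|). -/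
def IsPartialTransversal {α ι : Type*} (A : ι → Set α) (T : Set α) : Prop :=
  ∃ f : α → ι, Set.InjOn f T ∧ ∀ x ∈ T, x ∈ A (f x)

/-- Rank formula for the transversal matroid: for any `U ⊆ S`, the rank of `U`
(the maximum size of an independent, i.e. partial-transversal, subset of `U`)
equals `min over I ⊆ [k]` of `|[k] \ I| + |⋃_{i ∈ I} (A_i ∩ U)|`. -/
theorem transversal_matroid_rank {α : Type*} [Fintype α] {k : ℕ}
    (S : Set α) (A : Fin k → Set α) (hA : ∀ i, A i ⊆ S)
    (M : Matroid α) (hE : M.E = S)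
    (hI : ∀ T : Set α, M.Indep T ↔ IsPartialTransversal A T)
    (U : Set α) (hU : U ⊆ S) :
    sSup {n : ℕ | ∃ T ⊆ U, M.Indep T ∧ T.ncard = n} =
    sInf {n : ℕ | ∃ I : Finset (Fin k),
      n = (k - I.card) + (⋃ i ∈ I, A i ∩ U).ncard} := by
  classical
  set infS := {n : ℕ | ∃ I : Finset (Fin k),
      n = (k - I.card) + (⋃ i ∈ I, A i ∩ U).ncard} with hinfS
  have hk_mem : (k : ℕ) ∈ infS := ⟨∅, by simp⟩
  have hne : infS.Nonempty := ⟨k, hk_mem⟩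
  set m := sInf infS with hm
  have hmk : m ≤ k := Nat.sInf_le hk_mem
  -- easy direction
  have easy : ∀ T : Set α, T ⊆ U → IsPartialTransversal A T → T.ncard ≤ m := by
    rintro T hTU ⟨f, hfinj, hfmem⟩
    apply le_csInf hne
    rintro n ⟨I, rfl⟩
    set T1 := {x ∈ T | f x ∈ I} with hT1
    set T2 := {x ∈ T | f x ∉ I} with hT2
    have hsplit : T = T1 ∪ T2 := by
      ext x; by_cases h : f x ∈ I <;> simp [hT1, hT2, h]
    have c1 : T1.ncard ≤ (⋃ i ∈ I, A i ∩ U).ncard := by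
      apply Set.ncard_le_ncard _ (Set.toFinite _)
      rintro x ⟨hxT, hxI⟩
      exact Set.mem_biUnion hxI ⟨hfmem x hxT, hTU hxT⟩
    have c2 : T2.ncard ≤ k - I.card := by
      have himg : f '' T2 ⊆ (↑I : Set (Fin k))ᶜ := by
        rintro y ⟨x, ⟨hxT, hxI⟩, rfl⟩; exact hxI
      have heq : (f '' T2).ncard = T2.ncard :=
        Set.ncard_image_of_injOn (hfinj.mono fun x hx => hx.1)
      have hcompl := Set.ncard_add_ncard_compl (↑I : Set (Fin k))
      rw [Set.ncard_coe_finset, Nat.card_eq_fintype_card, Fintype.card_fin] at hcompl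
      have hle : (f '' T2).ncard ≤ ((↑I : Set (Fin k))ᶜ).ncard :=
        Set.ncard_le_ncard himg (Set.toFinite _)
      omega
    calc T.ncard ≤ T1.ncard + T2.ncard := hsplit ▸ Set.ncard_union_le T1 T2
      _ ≤ (⋃ i ∈ I, A i ∩ U).ncard + (k - I.card) := Nat.add_le_add c1 c2
      _ = (k - I.card) + (⋃ i ∈ I, A i ∩ U).ncard := Nat.add_comm _ _
  -- default function from empty transversal
  obtain ⟨f0, -, -⟩ := (hI ∅).mp M.empty_indep
  set d := k - m with hd
  -- bipartite Hall setup
  set inlE : α ↪ α ⊕ Fin d := ⟨Sum.inl, Sum.inl_injective⟩ with hinlE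
  set inrE : Fin d ↪ α ⊕ Fin d := ⟨Sum.inr, Sum.inr_injective⟩ with hinrE
  set t : Fin k → Finset (α ⊕ Fin d) :=
    fun i => ((A i ∩ U).toFinset.map inlE) ∪ (Finset.univ.map inrE) with ht
  have hcard_biUnion : ∀ s : Finset (Fin k),
      (s.biUnion fun i => (A i ∩ U).toFinset).card = (⋃ i ∈ s, A i ∩ U).ncard := by
    intro s
    rw [Set.ncard_eq_toFinset_card']
    congr 1
    ext x
    simp only [Set.mem_toFinset, Set.mem_iUnion, Finset.mem_biUnion, exists_prop]
  have hall : ∀ s : Finset (Fin k), s.card ≤ (s.biUnion t).card := by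
    intro s
    rcases s.eq_empty_or_nonempty with rfl | hs
    · simp
    have hunion : s.biUnion t =
        ((s.biUnion fun i => (A i ∩ U).toFinset).map inlE) ∪ (Finset.univ.map inrE) := by
      ext b
      cases b with
      | inl x => simp [ht, hinlE, hinrE]
      | inr y =>
        simp only [Finset.mem_biUnion, ht, Finset.mem_union, Finset.mem_map,
          Finset.mem_univ, hinlE, hinrE, Function.Embedding.coeFn_mk]
        simp only [Set.mem_toFinset]
        constructor
        · intro _; right; exact ⟨y, trivial, rfl⟩
        · intro _; exact ⟨hs.choose, hs.choose_spec, Or.inr ⟨y, trivial, rfl⟩⟩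
    have hdisj : Disjoint ((s.biUnion fun i => (A i ∩ U).toFinset).map inlE)
        ((Finset.univ : Finset (Fin d)).map inrE) := by
      rw [Finset.disjoint_left]
      rintro b hb hb'
      simp only [Finset.mem_map, hinlE, hinrE, Function.Embedding.coeFn_mk] at hb hb'
      obtain ⟨x, -, rfl⟩ := hb
      obtain ⟨y, -, hy⟩ := hb'
      exact Sum.inl_ne_inr hy.symm
    rw [hunion, Finset.card_union_of_disjoint hdisj, Finset.card_map, Finset.card_map,
      Finset.card_univ, Fintype.card_fin, hcard_biUnion]
    have hmle : m ≤ (k - s.card) + (⋃ i ∈ s, A i ∩ U).ncard := Nat.sInf_le ⟨s, rfl⟩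
    have hsk : s.card ≤ k := by
      simpa using Finset.card_le_univ s
    omega
  obtain ⟨f, hfinj, hft⟩ := (Finset.all_card_le_biUnion_card_iff_exists_injective t).mp hall
  -- the transversal
  set Tf : Finset α := Finset.univ.filter (fun x => ∃ i, f i = Sum.inl x) with hTf
  have hmemA : ∀ i x, f i = Sum.inl x → x ∈ A i ∩ U := by
    intro i x hfi
    have := hft i
    rw [hfi] at this
    simp only [ht, Finset.mem_union, Finset.mem_map, hinlE, hinrE,
      Function.Embedding.coeFn_mk, Set.mem_toFinset] at this
    rcases this with ⟨y, hy, hyx⟩ | ⟨y, -, hy⟩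
    · cases Sum.inl_injective hyx; exact hy
    · exact absurd hy (Sum.inr_ne_inl)
  have hTU : (↑Tf : Set α) ⊆ U := by
    intro x hx
    simp only [hTf, Finset.coe_filter, Set.mem_setOf_eq] at hx
    obtain ⟨-, i, hi⟩ := hx
    exact (hmemA i x hi).2
  have htrans : IsPartialTransversal A (↑Tf : Set α) := by
    refine ⟨fun x => if h : ∃ i, f i = Sum.inl x then h.choose else f0 x, ?_, ?_⟩
    · intro x hx y hy hxy
      simp only [hTf, Finset.coe_filter, Set.mem_setOf_eq] at hx hy
      obtain ⟨-, hex⟩ := hx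
      obtain ⟨-, hey⟩ := hy
      simp only [dif_pos hex, dif_pos hey] at hxy
      have h1 := hex.choose_spec
      have h2 := hey.choose_spec
      rw [hxy] at h1
      rw [h1] at h2
      exact Sum.inl_injective h2
    · intro x hx
      simp only [hTf, Finset.coe_filter, Set.mem_setOf_eq] at hx
      obtain ⟨-, hex⟩ := hx
      simp only [dif_pos hex]
      exact (hmemA _ x hex.choose_spec).1
  -- cardinality of Tf
  have hTfcard : m ≤ Tf.card := by
    have himg : (Finset.univ.image f) ⊆ (Tf.map inlE) ∪ (Finset.univ.map inrE) := by
      intro b hb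
      simp only [Finset.mem_image, Finset.mem_univ, true_and] at hb
      obtain ⟨i, rfl⟩ := hb
      cases hfi : f i with
      | inl x =>
        apply Finset.mem_union_left
        simp only [Finset.mem_map, hinlE, Function.Embedding.coeFn_mk, hTf,
          Finset.mem_filter, Finset.mem_univ, true_and]
        exact ⟨x, ⟨i, hfi⟩, rfl⟩
      | inr y =>
        apply Finset.mem_union_right
        simp only [Finset.mem_map, hinrE, Function.Embedding.coeFn_mk, Finset.mem_univ,
          true_and]
        exact ⟨y, rfl⟩
    have hcard1 : (Finset.univ.image f).card = k := by
      rw [Finset.card_image_of_injective _ hfinj, Finset.card_univ, Fintype.card_fin]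
    have h2 : k ≤ Tf.card + d := by
      calc k = (Finset.univ.image f).card := hcard1.symm
        _ ≤ ((Tf.map inlE) ∪ (Finset.univ.map inrE)).card := Finset.card_le_card himg
        _ ≤ (Tf.map inlE).card + (Finset.univ.map inrE).card := Finset.card_union_le _ _
        _ = Tf.card + d := by
            rw [Finset.card_map, Finset.card_map, Finset.card_univ, Fintype.card_fin]
    omega
  have hTfcard' : (↑Tf : Set α).ncard = m := by
    have h1 := easy _ hTU htrans
    rw [Set.ncard_coe_finset] at h1 ⊢
    omega
  -- conclusion
  have hmem_sup : m ∈ {n : ℕ | ∃ T ⊆ U, M.Indep T ∧ T.ncard = n} :=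
    ⟨↑Tf, hTU, (hI _).mpr htrans, hTfcard'⟩
  have hub : ∀ n ∈ {n : ℕ | ∃ T ⊆ U, M.Indep T ∧ T.ncard = n}, n ≤ m := by
    rintro n ⟨T, hTU', hTind, rfl⟩
    exact easy T hTU' ((hI T).mp hTind)
  exact le_antisymm (csSup_le ⟨m, hmem_sup⟩ hub)
    (le_csSup ⟨m, hub⟩ hmem_sup)
end

section
/- Let M_1, ..., M_k be matroids on ground sets E_1, ..., E_k with rank functions r_1, ..., r_k. Then their union M_1 ∨ ⋯ ∨ M_k, whose independent sets are all unions I_1 ∪ ⋯ ∪ I_k with I_j independent in M_j, is a matroid on E_1 ∪ ⋯ ∪ E_k with rank function r(U) = min over T ⊆ U of (|U \ T| + Σ_{i∈[k]} r_i(T ∩ E_i)). -/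
/-- The rank of `U` for an independence predicate: the maximum size of an
independent subset of `U`. -/
noncomputable def rankOf {α : Type*} (Ind : Set α → Prop) (U : Set α) : ℕ :=
  sSup {n | ∃ I ⊆ U, Ind I ∧ I.ncard = n}

/-! The function `T ↦ Σ i, r_i (T ∩ E_i)` is normalized, monotone and submodular, and every such
integer function `f` induces a matroid whose independent sets are the `I` with `|T| ≤ f T` for all
`T ⊆ I` (Edmonds). Its rank is `U ↦ min_{T ⊆ U} |U \ T| + f T`: for a basis `I` of `U`, the
largest `f`-tight subset `A` of `I` absorbs `U \ I`, so `T = A ∪ (U \ I)` attains `|I|`.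
That these `I` are exactly the unions of independent sets of the `M_i` is Rado's theorem: while
some `x` is still allowed into two of the matroids, submodularity of the `r_i` shows that one of
the two options can be forbidden without breaking Rado's condition. -/

open Set

namespace Matroid

variable {α : Type*} [Finite α] {M : Matroid α} {I X Y : Set α}

lemma IsBasis'.rankOf_eq_ncard (hI : M.IsBasis' I X) : rankOf M.Indep X = I.ncard := by
  refine IsGreatest.csSup_eq ⟨⟨I, hI.subset, hI.indep, rfl⟩, ?_⟩
  rintro n ⟨J, hJX, hJ, rfl⟩
  rw [← Nat.cast_le (α := ℕ∞), J.toFinite.cast_ncard_eq, I.toFinite.cast_ncard_eq,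
    hI.encard_eq_eRk]
  exact hJ.encard_le_eRk_of_subset hJX

lemma cast_rankOf (M : Matroid α) (X : Set α) : (rankOf M.Indep X : ℕ∞) = M.eRk X := by
  obtain ⟨I, hI⟩ := M.exists_isBasis' X
  rw [hI.rankOf_eq_ncard, I.toFinite.cast_ncard_eq, hI.encard_eq_eRk]

lemma rankOf_empty (M : Matroid α) : rankOf M.Indep ∅ = 0 := by
  rw [← Nat.cast_inj (R := ℕ∞), cast_rankOf, eRk_empty, Nat.cast_zero]

lemma rankOf_mono (M : Matroid α) (hXY : X ⊆ Y) : rankOf M.Indep X ≤ rankOf M.Indep Y := by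
  rw [← Nat.cast_le (α := ℕ∞), cast_rankOf, cast_rankOf]
  exact M.eRk_mono hXY

lemma rankOf_inter_add_rankOf_union_le (M : Matroid α) (X Y : Set α) :
    rankOf M.Indep (X ∩ Y) + rankOf M.Indep (X ∪ Y) ≤ rankOf M.Indep X + rankOf M.Indep Y := by
  rw [← Nat.cast_le (α := ℕ∞)]
  push_cast
  simp only [cast_rankOf]
  exact M.eRk_inter_add_eRk_union_le X Y

lemma Indep.ncard_le_rankOf (hI : M.Indep I) (hIX : I ⊆ X) : I.ncard ≤ rankOf M.Indep X := by
  rw [← Nat.cast_le (α := ℕ∞), cast_rankOf, I.toFinite.cast_ncard_eq]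
  exact hI.encard_le_eRk_of_subset hIX

lemma indep_of_ncard_le_rankOf (h : I.ncard ≤ rankOf M.Indep I) : M.Indep I := by
  rw [← Nat.cast_le (α := ℕ∞), cast_rankOf, I.toFinite.cast_ncard_eq] at h
  exact (indep_iff_eRk_eq_encard_of_finite I.toFinite).2 ((M.eRk_le_encard I).antisymm h)

end Matroid

section Polymatroid

variable {α : Type*} {f : Set α → ℕ} {A I J W : Set α} {x : α}

structure IsPolymatroidRank (f : Set α → ℕ) : Prop where
  map_empty : f ∅ = 0
  mono : Monotone f
  inter_add_union_le : ∀ X Y, f (X ∩ Y) + f (X ∪ Y) ≤ f X + f Y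

def SubmodIndep (f : Set α → ℕ) (I : Set α) : Prop := ∀ T ⊆ I, T.ncard ≤ f T

lemma SubmodIndep.subset (hJ : SubmodIndep f J) (hIJ : I ⊆ J) : SubmodIndep f I :=
  fun T hT ↦ hJ T (hT.trans hIJ)

lemma SubmodIndep.subset_of_singleton_eq_zero (hI : SubmodIndep f I) (E : Set α)
    (hE : ∀ x ∉ E, f {x} = 0) : I ⊆ E := by
  intro x hxI
  by_contra hxE
  simpa [hE x hxE] using hI {x} (singleton_subset_iff.2 hxI)

variable [Finite α]

lemma SubmodIndep.ncard_le (hf : IsPolymatroidRank f) (hI : SubmodIndep f I) (U T : Set α)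
    (hIU : I ⊆ U) : I.ncard ≤ (U \ T).ncard + f T := by
  have hIT : (I ∩ T).ncard ≤ f T := (hI _ inter_subset_left).trans (hf.mono inter_subset_right)
  have hIU : (I \ T).ncard ≤ (U \ T).ncard := ncard_le_ncard (sdiff_subset_sdiff_left hIU)
  have := ncard_inter_add_ncard_sdiff_eq_ncard I T
  omega

namespace IsPolymatroidRank

lemma union_le_of_forall_insert_le (hf : IsPolymatroidRank f)
    (hW : ∀ x ∈ W, f (insert x A) ≤ f A) : f (A ∪ W) ≤ f A := by
  induction W, W.toFinite using Set.Finite.induction_on with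
  | empty => simp
  | @insert x W _ _ ih =>
    have hsub := hf.inter_add_union_le (A ∪ W) (insert x A)
    have hA : f A ≤ f ((A ∪ W) ∩ insert x A) :=
      hf.mono (subset_inter subset_union_left (subset_insert x A))
    have hunion : (A ∪ W) ∪ insert x A = A ∪ insert x W := by
      ext y; simp only [mem_union, mem_insert_iff]; tauto
    rw [hunion] at hsub
    have := ih fun y hy ↦ hW y (mem_insert_of_mem x hy)
    have := hW x (mem_insert x W)
    omega

lemma exists_maximal_tight (hf : IsPolymatroidRank f) (hI : SubmodIndep f I) :
    ∃ A ⊆ I, f A = A.ncard ∧ ∀ B ⊆ I, f B = B.ncard → B ⊆ A := by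
  have htight : ∀ ⦃A B⦄, A ⊆ I → B ⊆ I → f A = A.ncard → f B = B.ncard →
      f (A ∪ B) = (A ∪ B).ncard := by
    intro A B hA hB hfA hfB
    have := hf.inter_add_union_le A B
    have := hI (A ∩ B) (inter_subset_left.trans hA)
    have := hI _ (union_subset hA hB)
    have := ncard_union_add_ncard_inter A B
    omega
  obtain ⟨A, ⟨hAI, hfA⟩, hmax⟩ := exists_max_image {A | A ⊆ I ∧ f A = A.ncard} ncard
    (toFinite _) ⟨∅, empty_subset I, by simp [hf.map_empty]⟩
  refine ⟨A, hAI, hfA, fun B hBI hfB ↦ ?_⟩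
  have hAB : A ∪ B = A := (eq_of_subset_of_ncard_le subset_union_left
    (hmax _ ⟨union_subset hAI hBI, htight hAI hBI hfA hfB⟩)).symm
  exact hAB ▸ subset_union_right

lemma insert_le_of_not_submodIndep (hf : IsPolymatroidRank f) (hI : SubmodIndep f I)
    (hmax : ∀ B ⊆ I, f B = B.ncard → B ⊆ A) (hx : x ∉ I)
    (hxI : ¬ SubmodIndep f (insert x I)) : f (insert x A) ≤ f A := by
  obtain ⟨T, hTI, hfT⟩ : ∃ T ⊆ insert x I, f T < T.ncard := by
    simpa [SubmodIndep] using hxI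
  have hxT : x ∈ T := by
    by_contra hxT
    exact (hI T fun y hy ↦ (hTI hy).resolve_left (by rintro rfl; exact hxT hy)).not_gt hfT
  have hBI : T \ {x} ⊆ I := fun y hy ↦ (hTI hy.1).resolve_left hy.2
  have hB := hI _ hBI
  have hfB := hf.mono (sdiff_subset : T \ {x} ⊆ T)
  have hcard := ncard_sdiff_singleton_add_one hxT
  have hBA : T \ {x} ⊆ A := hmax _ hBI (by omega)
  have hsub := hf.inter_add_union_le A T
  have := hf.mono (subset_inter hBA sdiff_subset : T \ {x} ⊆ A ∩ T)
  have := hf.mono (insert_subset (mem_union_right A hxT) subset_union_left)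
  omega

lemma exists_tight_union (hf : IsPolymatroidRank f) (hI : SubmodIndep f I)
    (hW : ∀ x ∈ W, x ∉ I ∧ ¬ SubmodIndep f (insert x I)) :
    ∃ A ⊆ I, f (A ∪ W) = A.ncard := by
  obtain ⟨A, hAI, hfA, hmax⟩ := hf.exists_maximal_tight hI
  refine ⟨A, hAI, le_antisymm ?_ (hfA ▸ hf.mono subset_union_left)⟩
  exact hfA ▸ hf.union_le_of_forall_insert_le fun x hx ↦
    hf.insert_le_of_not_submodIndep hI hmax (hW x hx).1 (hW x hx).2

lemma exists_insert_submodIndep (hf : IsPolymatroidRank f) (hI : SubmodIndep f I)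
    (hJ : SubmodIndep f J) (hIJ : I.ncard < J.ncard) :
    ∃ x ∈ J, x ∉ I ∧ SubmodIndep f (insert x I) := by
  by_contra! hcon
  obtain ⟨A, hAI, hfA⟩ := hf.exists_tight_union hI (W := J \ I)
    fun x hx ↦ ⟨hx.2, hcon x hx.1 hx.2⟩
  have hT := hJ _ (union_subset inter_subset_right sdiff_subset : (A ∩ J) ∪ (J \ I) ⊆ J)
  have hfT := hf.mono (union_subset_union_left (J \ I) (inter_subset_left : A ∩ J ⊆ A))
  have hdisj : Disjoint (A ∩ J) (J \ I) :=
    disjoint_left.2 fun x hxA hxJ ↦ hxJ.2 (hAI hxA.1)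
  rw [ncard_union_eq hdisj] at hT
  have := ncard_inter_add_ncard_sdiff_eq_ncard A J
  have := ncard_le_ncard (sdiff_subset_sdiff_left hAI : A \ J ⊆ I \ J)
  have := ncard_inter_add_ncard_sdiff_eq_ncard I J
  have := ncard_inter_add_ncard_sdiff_eq_ncard J I
  rw [inter_comm J I] at this
  omega

noncomputable def matroid (hf : IsPolymatroidRank f) (E : Set α) (hE : ∀ x ∉ E, f {x} = 0) :
    Matroid α :=
  (IndepMatroid.ofFinite E.toFinite (SubmodIndep f) (fun _ h ↦ by simp [subset_empty_iff.1 h])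
    (fun _ _ hJ hIJ ↦ hJ.subset hIJ) (fun _ _ hI hJ hIJ ↦ hf.exists_insert_submodIndep hI hJ hIJ)
    (fun _ hI ↦ hI.subset_of_singleton_eq_zero E hE)).matroid

lemma rankOf_matroid (hf : IsPolymatroidRank f) (E : Set α) (hE : ∀ x ∉ E, f {x} = 0)
    (U : Set α) :
    rankOf (hf.matroid E hE).Indep U = sInf {n | ∃ T ⊆ U, n = (U \ T).ncard + f T} := by
  obtain ⟨I, hI⟩ := (hf.matroid E hE).exists_isBasis' U
  have hIind : SubmodIndep f I := hI.indep
  rw [hI.rankOf_eq_ncard]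
  refine le_antisymm (le_csInf ⟨_, U, subset_rfl, rfl⟩ ?_) ?_
  · rintro n ⟨T, -, rfl⟩
    exact hIind.ncard_le hf U T hI.subset
  obtain ⟨A, hAI, hfA⟩ := hf.exists_tight_union hIind (W := U \ I)
    fun x hx ↦ ⟨hx.2, hI.insert_not_indep hx⟩
  have hUA : U \ (A ∪ U \ I) = I \ A := by
    ext y
    simp only [mem_sdiff, mem_union, not_or, not_and, not_not]
    exact ⟨fun h ↦ ⟨h.2.2 h.1, h.2.1⟩, fun h ↦ ⟨hI.subset h.1, h.2, fun _ ↦ h.1⟩⟩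
  refine Nat.sInf_le ⟨A ∪ U \ I, union_subset (hAI.trans hI.subset) sdiff_subset, ?_⟩
  rw [hUA, hfA, ncard_sdiff_add_ncard_of_subset hAI]

end IsPolymatroidRank

end Polymatroid

section Rado

variable {α ι : Type*} [Fintype ι] {M : ι → Matroid α} {R : Set (α × ι)} {I : Set α}

/-- Rado's condition for covering `I` by sets independent in the `M i`, where `x` may only be
put into `M i` if `(x, i) ∈ R`. -/
def RadoCondition (M : ι → Matroid α) (R : Set (α × ι)) (I : Set α) : Prop :=
  ∀ T ⊆ I, T.ncard ≤ ∑ i, rankOf (M i).Indep {y ∈ T | (y, i) ∈ R}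

lemma RadoCondition.mem_of_sum_rankOf_sdiff_lt (h : RadoCondition M R I) {T : Set α} {x : α}
    {c : ι} (hTI : T ⊆ I)
    (hT : ∑ i, rankOf (M i).Indep {y ∈ T | (y, i) ∈ R \ {(x, c)}} < T.ncard) : x ∈ T := by
  by_contra hxT
  have hfib : ∀ i, {y ∈ T | (y, i) ∈ R \ {(x, c)}} = {y ∈ T | (y, i) ∈ R} := fun i ↦ by
    ext y
    simp only [mem_ofPred_eq, mem_sdiff, mem_singleton_iff, Prod.mk.injEq]
    exact ⟨fun h ↦ ⟨h.1, h.2.1⟩, fun h ↦ ⟨h.1, h.2, fun hy ↦ hxT (hy.1 ▸ h.1)⟩⟩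
  simp only [hfib] at hT
  exact (h T hTI).not_gt hT

variable [Finite α]

lemma RadoCondition.sdiff_or_sdiff (h : RadoCondition M R I) (x : α) {a b : ι} (hab : a ≠ b) :
    RadoCondition M (R \ {(x, a)}) I ∨ RadoCondition M (R \ {(x, b)}) I := by
  by_contra! hcon
  obtain ⟨⟨Ta, hTaI, hTa⟩, ⟨Tb, hTbI, hTb⟩⟩ : (∃ T ⊆ I, ∑ i, rankOf (M i).Indep
      {y ∈ T | (y, i) ∈ R \ {(x, a)}} < T.ncard) ∧ ∃ T ⊆ I, ∑ i, rankOf (M i).Indep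
      {y ∈ T | (y, i) ∈ R \ {(x, b)}} < T.ncard := by
    simpa [RadoCondition] using hcon
  have hxa := h.mem_of_sum_rankOf_sdiff_lt hTaI hTa
  have hxb := h.mem_of_sum_rankOf_sdiff_lt hTbI hTb
  have hterm : ∀ i, rankOf (M i).Indep {y ∈ (Ta ∩ Tb) \ {x} | (y, i) ∈ R}
      + rankOf (M i).Indep {y ∈ Ta ∪ Tb | (y, i) ∈ R}
      ≤ rankOf (M i).Indep {y ∈ Ta | (y, i) ∈ R \ {(x, a)}}
        + rankOf (M i).Indep {y ∈ Tb | (y, i) ∈ R \ {(x, b)}} := by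
    intro i
    refine le_trans (add_le_add ((M i).rankOf_mono ?_) ((M i).rankOf_mono ?_))
      ((M i).rankOf_inter_add_rankOf_union_le _ _)
    · rintro y ⟨⟨⟨hya, hyb⟩, hyx⟩, hy⟩
      have hyx : y ≠ x := hyx
      simp_all
    · rintro y ⟨hy | hy, hyR⟩
      all_goals
        by_cases hyx : y = x
        · subst hyx
          by_cases hia : i = a
          · subst hia; exact Or.inr ⟨hxb, hyR, by simpa using hab⟩
          · exact Or.inl ⟨hxa, hyR, by simpa using hia⟩
        · simp_all
  have hsum := Finset.sum_le_sum fun i (_ : i ∈ Finset.univ) ↦ hterm i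
  simp only [Finset.sum_add_distrib] at hsum
  have := h _ (sdiff_subset.trans (inter_subset_left.trans hTaI) : (Ta ∩ Tb) \ {x} ⊆ I)
  have := h _ (union_subset hTaI hTbI)
  have := ncard_sdiff_singleton_add_one (show x ∈ Ta ∩ Tb from ⟨hxa, hxb⟩)
  have := ncard_union_add_ncard_inter Ta Tb
  omega

lemma RadoCondition.exists_functional (h : RadoCondition M R I) :
    ∃ R' ⊆ R, RadoCondition M R' I ∧ ∀ x a b, (x, a) ∈ R' → (x, b) ∈ R' → a = b := by
  induction hn : R.ncard using Nat.strong_induction_on generalizing R with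
  | _ n ih =>
    by_cases hfun : ∀ x a b, (x, a) ∈ R → (x, b) ∈ R → a = b
    · exact ⟨R, subset_rfl, h, hfun⟩
    push Not at hfun
    obtain ⟨x, a, b, ha, hb, hab⟩ := hfun
    have hsmaller : ∀ c, (x, c) ∈ R → (R \ {(x, c)}).ncard < n := fun c hc ↦
      hn ▸ ncard_sdiff_singleton_lt_of_mem hc
    rcases h.sdiff_or_sdiff x hab with h' | h'
    · obtain ⟨R', hRR', hR'⟩ := ih _ (hsmaller a ha) h' rfl
      exact ⟨R', hRR'.trans sdiff_subset, hR'⟩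
    · obtain ⟨R', hRR', hR'⟩ := ih _ (hsmaller b hb) h' rfl
      exact ⟨R', hRR'.trans sdiff_subset, hR'⟩

theorem RadoCondition.exists_indep_cover (h : RadoCondition M R I) :
    ∃ g : ι → Set α, (∀ i, (M i).Indep (g i)) ∧ I = ⋃ i, g i := by
  classical
  obtain ⟨R', -, hR', hfun⟩ := h.exists_functional
  refine ⟨fun i ↦ {x ∈ I | (x, i) ∈ R'}, fun i ↦ ?_, ?_⟩
  · refine Matroid.indep_of_ncard_le_rankOf ((hR' _ (sep_subset _ _)).trans_eq ?_)
    refine (Finset.sum_eq_single i (fun j _ hji ↦ ?_) (by simp)).trans ?_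
    · convert (M j).rankOf_empty
      ext y
      simpa using fun _ hyi hyj ↦ hji (hfun y j i hyj hyi)
    · congr 1
      ext y
      simp +contextual
  refine subset_antisymm (fun x hx ↦ ?_) (iUnion_subset fun i ↦ sep_subset _ _)
  have hx1 := hR' {x} (singleton_subset_iff.2 hx)
  rw [ncard_singleton] at hx1
  obtain ⟨i, -, hi⟩ := Finset.exists_ne_zero_of_sum_ne_zero (Nat.one_le_iff_ne_zero.1 hx1)
  obtain ⟨y, rfl, hyi⟩ : {y ∈ ({x} : Set α) | (y, i) ∈ R'}.Nonempty := by
    rw [nonempty_iff_ne_empty]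
    rintro hempty
    exact hi (hempty ▸ (M i).rankOf_empty)
  exact mem_iUnion.2 ⟨i, hx, hyi⟩

end Rado

section Union

variable {α ι : Type*} [Finite α] [Fintype ι] (M : ι → Matroid α)

noncomputable def sumRank (T : Set α) : ℕ := ∑ i, rankOf (M i).Indep (T ∩ (M i).E)

lemma isPolymatroidRank_sumRank : IsPolymatroidRank (sumRank M) where
  map_empty := Finset.sum_eq_zero fun i _ ↦ by rw [empty_inter, (M i).rankOf_empty]
  mono _ _ hXY := Finset.sum_le_sum fun i _ ↦ (M i).rankOf_mono (inter_subset_inter_left _ hXY)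
  inter_add_union_le X Y := by
    simp only [sumRank, ← Finset.sum_add_distrib]
    refine Finset.sum_le_sum fun i _ ↦ ?_
    rw [inter_inter_distrib_right, union_inter_distrib_right]
    exact (M i).rankOf_inter_add_rankOf_union_le _ _

lemma sumRank_singleton_eq_zero {x : α} (hx : x ∉ ⋃ i, (M i).E) : sumRank M {x} = 0 :=
  Finset.sum_eq_zero fun i _ ↦ by
    rw [singleton_inter_eq_empty.2 fun hxi ↦ hx (mem_iUnion_of_mem i hxi), (M i).rankOf_empty]

lemma submodIndep_sumRank_iff {I : Set α} :
    SubmodIndep (sumRank M) I ↔ ∃ g : ι → Set α, (∀ i, (M i).Indep (g i)) ∧ I = ⋃ i, g i := by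
  -- Rado's condition for the relation `x ∈ (M i).E` unfolds to independence for `sumRank M`
  refine ⟨fun hI ↦ RadoCondition.exists_indep_cover (R := {p | p.1 ∈ (M p.2).E}) hI, ?_⟩
  rintro ⟨g, hg, rfl⟩ T hT
  calc T.ncard = (⋃ i, T ∩ g i).ncard := by rw [← inter_iUnion, inter_eq_left.2 hT]
    _ ≤ ∑ i, (T ∩ g i).ncard := ncard_iUnion_le_of_fintype _
    _ ≤ sumRank M T := Finset.sum_le_sum fun i _ ↦ ((hg i).subset inter_subset_right).ncard_le_rankOf
        (inter_subset_inter_right T (hg i).subset_ground)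

end Union

/-- Matroid union theorem: the union of matroids `M_1, …, M_k`, whose
independent sets are all unions `I_1 ∪ ⋯ ∪ I_k` with `I_j` independent in
`M_j`, is a matroid on `E_1 ∪ ⋯ ∪ E_k`, and its rank function is given by
`r(U) = min over T ⊆ U of (|U \ T| + Σ_i r_i (T ∩ E_i))`. -/
theorem matroid_union {α : Type*} [Fintype α] {k : ℕ} (M : Fin k → Matroid α) :
    ∃ N : Matroid α, N.E = ⋃ i, (M i).E ∧
      (∀ I : Set α, N.Indep I ↔
        ∃ f : Fin k → Set α, (∀ i, (M i).Indep (f i)) ∧ I = ⋃ i, f i) ∧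
      ∀ U ⊆ ⋃ i, (M i).E,
        rankOf N.Indep U =
          sInf {n : ℕ | ∃ T ⊆ U,
            n = (U \ T).ncard + ∑ i : Fin k, rankOf (M i).Indep (T ∩ (M i).E)} := by
  have hf := isPolymatroidRank_sumRank M
  exact ⟨hf.matroid _ fun _ ↦ sumRank_singleton_eq_zero M, rfl, fun _ ↦ submodIndep_sumRank_iff M,
    fun U _ ↦ hf.rankOf_matroid _ _ U⟩
end
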